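/- arXiv:2406.11998 — 3 statements merged into one kernel-verified Lean document; each statement's English description precedes it below -/
import Mathlib

section
/- A path complex P on a finite set V with P_0 = V is generated by a simplicial complex — i.e., there exist an abstract simplicial complex S on V and an injective function f : V → ℝ such that P = { i_0…i_n : {i_0,…,i_n} ∈ S and f(i_0) < f(i_1) < … < f(i_n) } — if and only if P is perfect and monotonic. -/
/-!
A generated complex is perfect because its simplicial complex is closed under non-empty subsets
and strict increase along `f` passes to sublists, and it is monotonic via `f` itself.
Conversely, given a perfect complex monotonic via `g`, refine `g` to an injective `f` that
increases wherever `g` does, and let `S` consist of the vertex sets of the paths of `P`.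
Perfection makes `S` a simplicial complex, and since a list strictly increasing along `f` is
determined by its vertex set, the paths generated by `S` and `f` are exactly those of `P`.
-/

namespace PH

structure PathComplex (V : Type) where
  carrier : Set (List V)
  not_nil : ∀ p ∈ carrier, p ≠ []
  dropLast_mem : ∀ p ∈ carrier, 2 ≤ p.length → p.dropLast ∈ carrier
  tail_mem : ∀ p ∈ carrier, 2 ≤ p.length → p.tail ∈ carrier

end PH

namespace List

variable {V α : Type*} [Preorder α] {f : V → α} {l l' : List V}

theorem IsChain.pairwise_comp_lt (h : l.IsChain (fun a b => f a < f b)) :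
    l.Pairwise (fun a b => f a < f b) :=
  pairwise_map.mp (isChain_iff_pairwise.mp ((isChain_map f).mpr h))

theorem eq_of_toFinset_eq_of_isChain_comp_lt [DecidableEq V]
    (hl : l.IsChain (fun a b => f a < f b)) (hl' : l'.IsChain (fun a b => f a < f b))
    (h : l.toFinset = l'.toFinset) : l = l' := by
  have : Std.Irrefl (fun a b => f a < f b) := ⟨fun a => lt_irrefl (f a)⟩
  have : Std.Antisymm (fun a b => f a < f b) := ⟨fun _ _ hab hba => absurd hba hab.asymm⟩
  have hmem := toFinset.ext_iff.mp h
  exact Subset.antisymm_of_pairwise hl.pairwise_comp_lt hl'.pairwise_comp_lt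
    (fun x => (hmem x).mp) (fun x => (hmem x).mpr)

theorem toFinset_filter_mem [DecidableEq V] {t : Finset V} (ht : t ⊆ l.toFinset) :
    (l.filter (· ∈ t)).toFinset = t := by
  ext x
  simpa using fun hx => mem_toFinset.mp (ht hx)

end List

theorem exists_injective_lt_of_lt {V : Type*} [Finite V] (g : V → ℝ) :
    ∃ f : V → ℝ, Function.Injective f ∧ ∀ a b, g a < g b → f a < f b := by
  obtain ⟨n, ⟨e⟩⟩ := Finite.exists_equiv_fin V
  -- break ties of `g` lexicographically by an enumeration of `V`
  let : LinearOrder V := LinearOrder.lift' (fun v => toLex (g v, e v))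
    fun a b h => e.injective (congrArg Prod.snd (toLex.injective h))
  obtain ⟨φ⟩ := nonempty_orderEmbedding_of_finite_infinite V ℝ
  exact ⟨φ, φ.injective, fun a b h => φ.strictMono (Prod.Lex.left _ _ h)⟩

namespace PH

variable {V : Type} [DecidableEq V]

def generatedPaths (S : Set (Finset V)) (f : V → ℝ) : Set (List V) :=
  {l | l ≠ [] ∧ l.toFinset ∈ S ∧ l.IsChain (fun a b => f a < f b)}

theorem sublist_mem_generatedPaths {S : Set (Finset V)} {f : V → ℝ}
    (hS : ∀ s ∈ S, ∀ t : Finset V, t ⊆ s → t.Nonempty → t ∈ S) {l q : List V}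
    (hl : l ∈ generatedPaths S f) (hql : q.Sublist l) (hq : q ≠ []) :
    q ∈ generatedPaths S f := by
  obtain ⟨-, hlS, hlf⟩ := hl
  have hsub : q.toFinset ⊆ l.toFinset := fun _ hx =>
    List.mem_toFinset.mpr (hql.subset (List.mem_toFinset.mp hx))
  exact ⟨hq, hS _ hlS _ hsub ((List.toFinset_nonempty_iff q).mpr hq), hlf.sublist hql⟩

namespace PathComplex

def IsPerfect (P : PathComplex V) : Prop :=
  ∀ p ∈ P.carrier, ∀ q : List V, q.Sublist p → q ≠ [] → q ∈ P.carrier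

variable {P : PathComplex V}

theorem IsPerfect.mem_image_toFinset_of_subset (hP : P.IsPerfect) {s : Finset V}
    (hs : s ∈ List.toFinset '' P.carrier) {t : Finset V} (hts : t ⊆ s) (ht : t.Nonempty) :
    t ∈ List.toFinset '' P.carrier := by
  obtain ⟨p, hp, rfl⟩ := hs
  refine ⟨p.filter (· ∈ t), hP p hp _ List.filter_sublist ?_, List.toFinset_filter_mem hts⟩
  rw [← List.toFinset_nonempty_iff, List.toFinset_filter_mem hts]
  exact ht

theorem carrier_eq_generatedPaths {f : V → ℝ}
    (hf : ∀ p ∈ P.carrier, p.IsChain (fun a b => f a < f b)) :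
    P.carrier = generatedPaths (List.toFinset '' P.carrier) f := by
  ext l
  refine ⟨fun hl => ⟨P.not_nil l hl, ⟨l, hl, rfl⟩, hf l hl⟩, ?_⟩
  rintro ⟨-, ⟨p, hp, hpl⟩, hl⟩
  rwa [List.eq_of_toFinset_eq_of_isChain_comp_lt hl (hf p hp) hpl.symm]

end PathComplex

end PH

theorem statement4 (V : Type) [Fintype V] [DecidableEq V] (P : PH.PathComplex V)
    -- P₀ = V
    (h0 : ∀ v : V, [v] ∈ P.carrier) :
    -- P is generated by an abstract simplicial complex S on V via an injective f : V → ℝ …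
    (∃ (S : Set (Finset V)) (f : V → ℝ),
        (∀ s ∈ S, s.Nonempty) ∧
        (∀ s ∈ S, ∀ t : Finset V, t ⊆ s → t.Nonempty → t ∈ S) ∧
        (∀ v : V, {v} ∈ S) ∧
        Function.Injective f ∧
        P.carrier = {l : List V | l ≠ [] ∧ l.toFinset ∈ S ∧
          l.Chain' (fun a b => f a < f b)}) ↔
    -- … iff P is perfect and monotonic
    ((∀ p ∈ P.carrier, ∀ q : List V, q.Sublist p → q ≠ [] → q ∈ P.carrier) ∧
     (∃ f : V → ℝ, ∀ p ∈ P.carrier, p.Chain' (fun a b => f a < f b))) := by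
  constructor
  · rintro ⟨S, f, -, hS, -, -, hP⟩
    change P.carrier = PH.generatedPaths S f at hP
    rw [hP]
    exact ⟨fun p hp q hqp hq => PH.sublist_mem_generatedPaths hS hp hqp hq,
      f, fun p hp => hp.2.2⟩
  · rintro ⟨hperf : P.IsPerfect, g, hg⟩
    obtain ⟨f, hf_inj, hgf⟩ := exists_injective_lt_of_lt g
    have hf : ∀ p ∈ P.carrier, p.IsChain (fun a b => f a < f b) :=
      fun p hp => (hg p hp).imp fun _ _ => hgf _ _
    refine ⟨List.toFinset '' P.carrier, f, ?_,
      fun s hs t => hperf.mem_image_toFinset_of_subset hs, fun v => ⟨[v], h0 v, rfl⟩, hf_inj,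
      P.carrier_eq_generatedPaths hf⟩
    rintro s ⟨p, hp, rfl⟩
    exact (List.toFinset_nonempty_iff p).mpr (P.not_nil p hp)
end

section
/- Let G and G' be digraphs and f : G → G' a digraph map. Then the induced map on regular chains restricts to the ∂-invariant chains, i.e. f_*(Ω_n(G)) ⊆ Ω_n(G') for every n, giving a chain map f_* : Ω_*(G) → Ω_*(G') (∂∘f_* = f_*∘∂), and hence f induces group homomorphisms f_* : H_n(G) → H_n(G') on path homology for every n. -/
/-!
STATEMENT 6: Let G and G' be digraphs and f : G → G' a digraph map.  Then the induced
map on regular chains restricts to the ∂-invariant chains, f_*(Ω_n(G)) ⊆ Ω_n(G') for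
every n, giving a chain map f_* : Ω_*(G) → Ω_*(G') (∂∘f_* = f_*∘∂), and hence f induces
group homomorphisms f_* : H_n(G) → H_n(G') on path homology for every n.

The induced homology homomorphism is characterized on classes of cycles:
h([z]) = [f_* z].
-/

open scoped Classical

namespace PH

/-- An elementary path (a list of vertices) is regular if no two consecutive
vertices coincide. -/
def Reg {V : Type} (l : List V) : Prop := l.Chain' (· ≠ ·)

/-- The regular boundary operator ∂ on the span of regular paths (all degrees at once,
with the convention that ∂ vanishes on 0-paths): on a basis path `p` of length ≥ 2 it is
the alternating sum of the vertex deletions, with non-regular terms replaced by 0. -/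
noncomputable def dReg (K : Type) [Field K] (V : Type) :
    (List V →₀ K) →ₗ[K] (List V →₀ K) :=
  Finsupp.lsum K fun p => LinearMap.toSpanSingleton K (List V →₀ K)
    (if 2 ≤ p.length then
      ∑ q : Fin p.length, ((-1 : K) ^ (q : ℕ)) •
        (if Reg (p.eraseIdx (q : ℕ)) then Finsupp.single (p.eraseIdx (q : ℕ)) (1 : K) else 0)
    else 0)

/-- The map induced on regular chains by a vertex map f:
`e_{i₀…iₙ} ↦ e_{f(i₀)…f(iₙ)}` if the image path is regular, and 0 otherwise. -/
noncomputable def find (K : Type) [Field K] {V W : Type} (f : V → W) :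
    (List V →₀ K) →ₗ[K] (List W →₀ K) :=
  Finsupp.lsum K fun p => LinearMap.toSpanSingleton K (List W →₀ K)
    (if Reg (p.map f) then Finsupp.single (p.map f) (1 : K) else 0)

/-- `A_n(P)`: the span of the regular allowed n-paths (lists of n+1 vertices in P). -/
def Asub (K : Type) [Field K] {V : Type} (P : Set (List V)) (n : ℕ) :
    Submodule K (List V →₀ K) :=
  Finsupp.supported K K {l | l ∈ P ∧ l.length = n + 1 ∧ Reg l}

/-- `Ω_n(P)`: the ∂-invariant allowed regular n-chains. -/
noncomputable def OmegaSub (K : Type) [Field K] {V : Type} (P : Set (List V)) (n : ℕ) :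
    Submodule K (List V →₀ K) :=
  Asub K P n ⊓ Submodule.comap (dReg K V) (Asub K P (n - 1))

/-- The n-cycles of Ω_*(P). -/
noncomputable def Zsub (K : Type) [Field K] {V : Type} (P : Set (List V)) (n : ℕ) :
    Submodule K (List V →₀ K) :=
  OmegaSub K P n ⊓ LinearMap.ker (dReg K V)

/-- The n-boundaries ∂Ω_{n+1}(P). -/
noncomputable def Bsub (K : Type) [Field K] {V : Type} (P : Set (List V)) (n : ℕ) :
    Submodule K (List V →₀ K) :=
  Submodule.map (dReg K V) (OmegaSub K P (n + 1))

/-- Path homology `H_n(P)`, realized as the image of the n-cycles in the quotient of the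
ambient space by the n-boundaries (so `H_n(P) ≅ Z_n/(Z_n ∩ B_n) = Z_n/B_n`). -/
noncomputable def Hsm (K : Type) [Field K] {V : Type} (P : Set (List V)) (n : ℕ) :
    Submodule K ((List V →₀ K) ⧸ Bsub K P n) :=
  Submodule.map (Bsub K P n).mkQ (Zsub K P n)

end PH

namespace PH

/-- A digraph: an edge relation without self-loops on a vertex type. -/
structure Digraph' (V : Type) where
  edge : V → V → Prop
  loopless : ∀ v : V, ¬ edge v v

/-- The elementary paths of the path complex P(G) generated by a digraph G. -/
def pathsOf {V : Type} (G : Digraph' V) : Set (List V) :=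
  {l | l ≠ [] ∧ l.Chain' G.edge}

/-- A digraph map: i → j implies f(i) = f(j) or f(i) → f(j). -/
def IsDigraphMap {V W : Type} (G : Digraph' V) (H : Digraph' W) (f : V → W) : Prop :=
  ∀ i j : V, G.edge i j → f i = f j ∨ H.edge (f i) (f j)

end PH

/-!
The chain map property rests on one observation: `∂ e_q = 0` for every non-regular path
`q`, even though `e_q` itself is not a regular chain. Hence
`f_* ∂ e_p = ∂ e_{f(p)} = ∂ f_* e_p`, whether or not `f(p)` is regular. A digraph map sends
an allowed path either to an allowed path or to a non-regular one, so `f_*` preserves `A_*`;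
with `∂ f_* = f_* ∂` it then preserves `Ω_*`, cycles and boundaries, and so descends to path
homology.
-/

namespace PH

variable {K : Type} [Field K] {V W : Type}

noncomputable def regSingle (K : Type) [Field K] (q : List V) : List V →₀ K :=
  if Reg q then Finsupp.single q 1 else 0

lemma reg_iff_getElem {l : List V} :
    Reg l ↔ ∀ (i : ℕ) (h : i + 1 < l.length), l[i] ≠ l[i + 1] :=
  List.isChain_iff_getElem

lemma Reg.of_map {f : V → W} {l : List V} (h : Reg (l.map f)) : Reg l :=
  List.isChain_of_isChain_map f (fun _ _ hab e => hab (congrArg f e)) h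

lemma find_single (f : V → W) (p : List V) :
    find K f (Finsupp.single p 1) = regSingle K (p.map f) := by
  rw [find, Finsupp.lsum_single, LinearMap.toSpanSingleton_apply, one_smul, regSingle]

lemma find_regSingle (f : V → W) (q : List V) :
    find K f (regSingle K q) = regSingle K (q.map f) := by
  by_cases hfq : Reg (q.map f)
  · rw [regSingle, if_pos (Reg.of_map hfq), find_single]
  · by_cases hq : Reg q
    · rw [regSingle, if_pos hq, find_single]
    · rw [regSingle, regSingle, if_neg hq, if_neg hfq, map_zero]

lemma dReg_single (p : List V) :
    dReg K V (Finsupp.single p 1) =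
      if 2 ≤ p.length then
        ∑ k ∈ Finset.range p.length, (-1 : K) ^ k • regSingle K (p.eraseIdx k)
      else 0 := by
  rw [dReg, Finsupp.lsum_single, LinearMap.toSpanSingleton_apply, one_smul]
  split_ifs
  · exact Fin.sum_univ_eq_sum_range (fun k => (-1 : K) ^ k • regSingle K (p.eraseIdx k)) _
  · rfl

lemma find_dReg_single (f : V → W) (p : List V) :
    find K f (dReg K V (Finsupp.single p 1)) = dReg K W (Finsupp.single (p.map f) 1) := by
  simp only [dReg_single, List.length_map, apply_ite (find K f), map_sum, map_smul,
    find_regSingle, List.eraseIdx_map, map_zero]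

lemma eraseIdx_eq_eraseIdx_succ {l : List V} {j : ℕ} (hj : j + 1 < l.length)
    (h : l[j] = l[j + 1]) : l.eraseIdx j = l.eraseIdx (j + 1) := by
  refine List.ext_getElem (by simp only [List.length_eraseIdx]; split_ifs <;> omega)
    fun i hi _ => ?_
  simp only [List.getElem_eraseIdx]
  rcases lt_trichotomy i j with hij | rfl | hij
  · simp [hij, Nat.lt_succ_of_lt hij]
  · simp [h]
  · simp [not_lt.2 hij.le, Nat.not_lt.2 hij]

lemma not_reg_eraseIdx_of_getElem_eq {l : List V} {j k : ℕ} (hj : j + 1 < l.length)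
    (h : l[j] = l[j + 1]) (hkj : k ≠ j) (hkj' : k ≠ j + 1) : ¬ Reg (l.eraseIdx k) := by
  have hlen : (l.eraseIdx k).length = if k < l.length then l.length - 1 else l.length :=
    List.length_eraseIdx
  rw [reg_iff_getElem]
  intro hreg
  rcases Nat.lt_or_gt_of_ne hkj with hk | hk
  · obtain ⟨i, rfl⟩ : ∃ i, j = i + 1 := ⟨j - 1, by omega⟩
    refine hreg i (by split_ifs at hlen <;> omega) ?_
    simpa [List.getElem_eraseIdx, show ¬ i < k by omega, show ¬ i + 1 < k by omega] using h
  · refine hreg j (by split_ifs at hlen <;> omega) ?_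
    simpa [List.getElem_eraseIdx, show j < k by omega, show j + 1 < k by omega] using h

/-- Deleting either vertex of a repeated pair gives the same path with opposite signs, and any
other deletion keeps the repetition. -/
lemma dReg_single_of_not_reg {q : List V} (hq : ¬ Reg q) :
    dReg K V (Finsupp.single q 1) = 0 := by
  obtain ⟨j, hj, hdup⟩ := List.exists_not_getElem_of_not_isChain hq
  rw [not_ne_iff] at hdup
  rw [dReg_single, if_pos (by omega), Finset.sum_eq_add j (j + 1) (by omega) ?_ ?_ ?_,
    eraseIdx_eq_eraseIdx_succ hj hdup, ← add_smul, pow_succ, mul_neg_one, add_neg_cancel,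
    zero_smul]
  · intro k _ hk
    rw [regSingle, if_neg (not_reg_eraseIdx_of_getElem_eq hj hdup hk.1 hk.2), smul_zero]
  · exact fun h => absurd (Finset.mem_range.2 (by omega)) h
  · exact fun h => absurd (Finset.mem_range.2 hj) h

lemma dReg_regSingle (q : List V) :
    dReg K V (regSingle K q) = dReg K V (Finsupp.single q 1) := by
  unfold regSingle
  split_ifs with hq
  · rfl
  · rw [map_zero, dReg_single_of_not_reg hq]

lemma dReg_comp_find (f : V → W) : dReg K W ∘ₗ find K f = find K f ∘ₗ dReg K V := by
  refine Finsupp.lhom_ext' fun p => LinearMap.ext_ring ?_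
  simp only [LinearMap.comp_apply, Finsupp.lsingle_apply, find_single, dReg_regSingle,
    find_dReg_single]

lemma dReg_find (f : V → W) (v : List V →₀ K) :
    dReg K W (find K f v) = find K f (dReg K V v) :=
  LinearMap.congr_fun (dReg_comp_find f) v

section PathSets

variable {P : Set (List V)} {P' : Set (List W)} {f : V → W}
  (hf : ∀ l ∈ P, Reg (l.map f) → l.map f ∈ P')
include hf

lemma find_mem_Asub {n : ℕ} {v : List V →₀ K} (hv : v ∈ Asub K P n) :
    find K f v ∈ Asub K P' n := by
  suffices Asub K P n ≤ (Asub K P' n).comap (find K f) from this hv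
  rw [Asub, Finsupp.supported_eq_span_single, Submodule.span_le]
  rintro _ ⟨l, ⟨hl, hlen, -⟩, rfl⟩
  rw [SetLike.mem_coe, Submodule.mem_comap, find_single, regSingle]
  split_ifs with hreg
  · exact Finsupp.single_mem_supported K 1 ⟨hf l hl hreg, by rw [List.length_map, hlen], hreg⟩
  · exact zero_mem _

lemma find_mem_OmegaSub {n : ℕ} {v : List V →₀ K} (hv : v ∈ OmegaSub K P n) :
    find K f v ∈ OmegaSub K P' n :=
  ⟨find_mem_Asub hf hv.1, by
    rw [SetLike.mem_coe, Submodule.mem_comap, dReg_find]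
    exact find_mem_Asub hf hv.2⟩

lemma find_mem_Zsub {n : ℕ} {z : List V →₀ K} (hz : z ∈ Zsub K P n) :
    find K f z ∈ Zsub K P' n :=
  ⟨find_mem_OmegaSub hf hz.1, by
    rw [SetLike.mem_coe, LinearMap.mem_ker, dReg_find, LinearMap.mem_ker.1 hz.2, map_zero]⟩

lemma find_mem_Bsub {n : ℕ} {x : List V →₀ K} (hx : x ∈ Bsub K P n) :
    find K f x ∈ Bsub K P' n := by
  obtain ⟨w, hw, rfl⟩ := hx
  exact ⟨find K f w, find_mem_OmegaSub hf hw, dReg_find f w⟩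

noncomputable def homologyMap (n : ℕ) : Hsm K P n →ₗ[K] Hsm K P' n :=
  ((Bsub K P n).mapQ (Bsub K P' n) (find K f) fun _ => find_mem_Bsub hf).restrict <| by
    rintro _ ⟨z, hz, rfl⟩
    exact ⟨find K f z, find_mem_Zsub hf hz, rfl⟩

lemma homologyMap_mk (n : ℕ) (z : List V →₀ K) (hz : z ∈ Zsub K P n) :
    homologyMap hf n ⟨(Bsub K P n).mkQ z, Submodule.mem_map_of_mem hz⟩ =
      ⟨(Bsub K P' n).mkQ (find K f z), Submodule.mem_map_of_mem (find_mem_Zsub hf hz)⟩ :=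
  rfl

end PathSets

lemma IsDigraphMap.map_mem_pathsOf {G : Digraph' V} {H : Digraph' W} {f : V → W}
    (hf : IsDigraphMap G H f) {l : List V} (hl : l ∈ pathsOf G) (hreg : Reg (l.map f)) :
    l.map f ∈ pathsOf H := by
  refine ⟨by simpa using hl.1, List.isChain_iff_getElem.2 fun i hi => ?_⟩
  have hne := reg_iff_getElem.1 hreg i hi
  simp only [List.length_map, List.getElem_map] at hi hne ⊢
  exact (hf _ _ (List.isChain_iff_getElem.1 hl.2 i hi)).resolve_left hne

end PH

theorem statement6_general (K : Type) [Field K] (V V' : Type)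
    (G : PH.Digraph' V) (G' : PH.Digraph' V') (f : V → V')
    (hf : PH.IsDigraphMap G G' f) :
    -- f_* restricts to the ∂-invariant chains
    (∀ (n : ℕ) (v : List V →₀ K), v ∈ PH.OmegaSub K (PH.pathsOf G) n →
        PH.find K f v ∈ PH.OmegaSub K (PH.pathsOf G') n) ∧
    -- f_* : Ω_*(G) → Ω_*(G') is a chain map
    (∀ (n : ℕ) (v : List V →₀ K), v ∈ PH.OmegaSub K (PH.pathsOf G) n →
        PH.dReg K V' (PH.find K f v) = PH.find K f (PH.dReg K V v)) ∧
    -- hence f induces homomorphisms on path homology, sending [z] to [f_* z]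
    (∀ n : ℕ, ∃ h : PH.Hsm K (PH.pathsOf G) n →ₗ[K] PH.Hsm K (PH.pathsOf G') n,
      ∀ (z : List V →₀ K) (hz : z ∈ PH.Zsub K (PH.pathsOf G) n)
        (hz' : PH.find K f z ∈ PH.Zsub K (PH.pathsOf G') n),
        h ⟨(PH.Bsub K (PH.pathsOf G) n).mkQ z, Submodule.mem_map_of_mem hz⟩ =
          ⟨(PH.Bsub K (PH.pathsOf G') n).mkQ (PH.find K f z),
            Submodule.mem_map_of_mem hz'⟩) := by
  have hP : ∀ l ∈ PH.pathsOf G, PH.Reg (l.map f) → l.map f ∈ PH.pathsOf G' :=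
    fun _ => hf.map_mem_pathsOf
  exact ⟨fun n v => PH.find_mem_OmegaSub hP, fun n v _ => PH.dReg_find f v,
    fun n => ⟨PH.homologyMap hP n, fun z hz _ => PH.homologyMap_mk hP n z hz⟩⟩

theorem statement6 (K : Type) [Field K] (V V' : Type) [Fintype V] [Fintype V']
    (G : PH.Digraph' V) (G' : PH.Digraph' V') (f : V → V')
    (hf : PH.IsDigraphMap G G' f) :
    -- f_* restricts to the ∂-invariant chains
    (∀ (n : ℕ) (v : List V →₀ K), v ∈ PH.OmegaSub K (PH.pathsOf G) n →
        PH.find K f v ∈ PH.OmegaSub K (PH.pathsOf G') n) ∧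
    -- f_* : Ω_*(G) → Ω_*(G') is a chain map
    (∀ (n : ℕ) (v : List V →₀ K), v ∈ PH.OmegaSub K (PH.pathsOf G) n →
        PH.dReg K V' (PH.find K f v) = PH.find K f (PH.dReg K V v)) ∧
    -- hence f induces homomorphisms on path homology, sending [z] to [f_* z]
    (∀ n : ℕ, ∃ h : PH.Hsm K (PH.pathsOf G) n →ₗ[K] PH.Hsm K (PH.pathsOf G') n,
      ∀ (z : List V →₀ K) (hz : z ∈ PH.Zsub K (PH.pathsOf G) n)
        (hz' : PH.find K f z ∈ PH.Zsub K (PH.pathsOf G') n),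
        h ⟨(PH.Bsub K (PH.pathsOf G) n).mkQ z, Submodule.mem_map_of_mem hz⟩ =
          ⟨(PH.Bsub K (PH.pathsOf G') n).mkQ (PH.find K f z),
            Submodule.mem_map_of_mem hz'⟩) :=
  statement6_general K V V' G G' f hf
end

section
/- For any path complex P on a finite set V, any field K, and any n ≥ 1, the n-th path homology of P coincides with that of the sub-path complex generated by its n- and (n+1)-paths: H_n(P) ≅ H_n(Δ(P_n ∪ P_{n+1})), where Δ(A) is the closure of the set of paths A under front and back truncation. -/
/-!
STATEMENT 12: For any path complex P on a finite set V, any field K, and any n ≥ 1, the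
n-th path homology of P coincides with that of the sub-path complex generated by its
n- and (n+1)-paths: H_n(P) ≅ H_n(Δ(P_n ∪ P_{n+1})), where Δ(A) is the closure of A under
front and back truncation (equivalently, the set of non-empty contiguous subwords of the
paths in A).
-/

open scoped Classical

namespace PH

/-- Δ(A): the path complex generated by a set A of elementary paths, i.e. the closure of
A under the truncations i₀…iₙ ↦ i₀…i_{n−1} and i₀…iₙ ↦ i₁…iₙ; concretely, the set of
non-empty infix subwords of paths in A. -/
def genPC {V : Type} (A : Set (List V)) : PathComplex V where
  carrier := {q | q ≠ [] ∧ ∃ p ∈ A, q <:+: p}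
  not_nil := fun p hp => hp.1
  dropLast_mem := by
    rintro p ⟨hne, q, hq, hinf⟩ hlen
    refine ⟨?_, q, hq, (List.dropLast_prefix p).isInfix.trans hinf⟩
    have : 0 < p.dropLast.length := by
      rw [List.length_dropLast]; omega
    exact List.length_pos_iff.mp this
  tail_mem := by
    rintro p ⟨hne, q, hq, hinf⟩ hlen
    refine ⟨?_, q, hq, (List.tail_suffix p).isInfix.trans hinf⟩
    have : 0 < p.tail.length := by
      rw [List.length_tail]; omega
    exact List.length_pos_iff.mp this

end PH

/-!
`H_n` only sees the allowed regular paths of lengths `n` and `n + 1`: the cycles are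
`A_n ∩ ker ∂` and the boundaries are `∂(A_{n+1} ∩ ∂⁻¹ A_n)`. A path complex is closed under
taking non-empty infixes, so `Δ(P_n ∪ P_{n+1})` has exactly the `n`- and `(n+1)`-paths of `P`.
-/

namespace PH

namespace PathComplex

variable {V : Type} (P : PathComplex V)

theorem mem_of_isSuffix {p q : List V} (hp : p ∈ P.carrier) (hq : q ≠ []) (hqp : q <:+ p) :
    q ∈ P.carrier := by
  induction p with
  | nil => exact absurd (List.eq_nil_of_suffix_nil hqp) hq
  | cons a p ih =>
    rcases List.suffix_cons_iff.mp hqp with rfl | hqp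
    · exact hp
    · have hp_ne : p ≠ [] := fun h => hq (List.eq_nil_of_suffix_nil (h ▸ hqp))
      have hlen : 2 ≤ (a :: p).length := by
        simpa [Nat.one_le_iff_ne_zero] using hp_ne
      exact ih (P.tail_mem _ hp hlen) hqp

theorem mem_of_isPrefix {p q : List V} (hp : p ∈ P.carrier) (hq : q ≠ []) (hqp : q <+: p) :
    q ∈ P.carrier := by
  induction p using List.reverseRecOn with
  | nil => exact absurd (List.eq_nil_of_prefix_nil hqp) hq
  | append_singleton p a ih =>
    rcases List.prefix_concat_iff.mp hqp with rfl | hqp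
    · exact hp
    · have hp_ne : p ≠ [] := fun h => hq (List.eq_nil_of_prefix_nil (h ▸ hqp))
      have hlen : 2 ≤ (p ++ [a]).length := by
        simpa [Nat.one_le_iff_ne_zero] using hp_ne
      exact ih (by simpa using P.dropLast_mem _ hp hlen) hqp

theorem mem_of_isInfix {p q : List V} (hp : p ∈ P.carrier) (hq : q ≠ []) (hqp : q <:+: p) :
    q ∈ P.carrier := by
  obtain ⟨t, hqt, htp⟩ := List.infix_iff_prefix_suffix.mp hqp
  have ht : t ≠ [] := fun h => hq (List.eq_nil_of_prefix_nil (h ▸ hqt))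
  exact P.mem_of_isPrefix (P.mem_of_isSuffix hp ht htp) hq hqt

end PathComplex

theorem genPC_carrier_subset {V : Type} {P : PathComplex V} {A : Set (List V)}
    (hA : A ⊆ P.carrier) : (genPC A).carrier ⊆ P.carrier := by
  rintro q ⟨hq, p, hpA, hqp⟩
  exact P.mem_of_isInfix (hA hpA) hq hqp

theorem mem_genPC_carrier {V : Type} {A : Set (List V)} {p : List V} (hp : p ∈ A)
    (hp_ne : p ≠ []) : p ∈ (genPC A).carrier :=
  ⟨hp_ne, p, hp, List.infix_refl p⟩

section Homology

variable (K : Type) [Field K] {V : Type}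

theorem Asub_congr {P Q : Set (List V)} (n : ℕ)
    (h : ∀ l : List V, l.length = n + 1 → (l ∈ P ↔ l ∈ Q)) : Asub K P n = Asub K Q n := by
  unfold Asub
  congr 1
  ext l
  exact and_congr_left fun hl => h l hl.1

theorem Zsub_eq_Asub_inf_ker (P : Set (List V)) (n : ℕ) :
    Zsub K P n = Asub K P n ⊓ LinearMap.ker (dReg K V) := by
  ext v
  simp only [Zsub, OmegaSub, Submodule.mem_inf, Submodule.mem_comap, LinearMap.mem_ker]
  constructor
  · rintro ⟨⟨hA, -⟩, hv⟩
    exact ⟨hA, hv⟩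
  · rintro ⟨hA, hv⟩
    exact ⟨⟨hA, by simp [hv]⟩, hv⟩

theorem nonempty_Hsm_equiv_of_Asub_eq {P Q : Set (List V)} (n : ℕ)
    (h₀ : Asub K P n = Asub K Q n) (h₁ : Asub K P (n + 1) = Asub K Q (n + 1)) :
    Nonempty (Hsm K P n ≃ₗ[K] Hsm K Q n) := by
  have hB : Bsub K P n = Bsub K Q n := by
    simp only [Bsub, OmegaSub, Nat.add_sub_cancel, h₀, h₁]
  have hZ : Zsub K P n = Zsub K Q n := by
    rw [Zsub_eq_Asub_inf_ker, Zsub_eq_Asub_inf_ker, h₀]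
  unfold Hsm
  rw [hB, hZ]
  exact ⟨LinearEquiv.refl K _⟩

end Homology

end PH

theorem statement12_general (K : Type) [Field K] (V : Type)
    (P : PH.PathComplex V) (n : ℕ) :
    Nonempty ((PH.Hsm K P.carrier n) ≃ₗ[K]
      (PH.Hsm K (PH.genPC
        {l | l ∈ P.carrier ∧ (l.length = n + 1 ∨ l.length = n + 2)}).carrier n)) := by
  set A : Set (List V) := {l | l ∈ P.carrier ∧ (l.length = n + 1 ∨ l.length = n + 2)}
  have hA : A ⊆ P.carrier := fun l hl => hl.1
  have h_same : ∀ m, (m = n + 1 ∨ m = n + 2) →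
      ∀ l : List V, l.length = m → (l ∈ P.carrier ↔ l ∈ (PH.genPC A).carrier) := by
    rintro m hm l rfl
    refine ⟨fun hl => PH.mem_genPC_carrier ⟨hl, hm⟩ ?_, fun hl => PH.genPC_carrier_subset hA hl⟩
    rintro rfl
    simp at hm
  exact PH.nonempty_Hsm_equiv_of_Asub_eq K n
    (PH.Asub_congr K n (h_same _ (Or.inl rfl))) (PH.Asub_congr K (n + 1) (h_same _ (Or.inr rfl)))

theorem statement12 (K : Type) [Field K] (V : Type) [Fintype V]
    (P : PH.PathComplex V) (n : ℕ) (hn : 1 ≤ n) :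
    Nonempty ((PH.Hsm K P.carrier n) ≃ₗ[K]
      (PH.Hsm K (PH.genPC
        {l | l ∈ P.carrier ∧ (l.length = n + 1 ∨ l.length = n + 2)}).carrier n)) :=
  statement12_general K V P n
end
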